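/- Let γ : ℝ → ℂ be differentiable, let t ∈ ℝ, let x ∈ ℝⁿ be a unit vector, and let u, v ∈ ℝⁿ satisfy ⟨x,u⟩ = ⟨x,v⟩ = 0. Then for all real numbers a, b, the standard symplectic form ω on ℂⁿ satisfies ω(a·γ'(t)•x + γ(t)•u, b·γ'(t)•x + γ(t)•v) = 0. In particular every tangent space of the map j : ℝ × S^{n-1} → ℂⁿ, j(t,x) = γ(t)•x, is isotropic for ω. -/

import Mathlib

open Complex

/-- The standard symplectic form on ℂⁿ: ω(u,v) = Im⟨u,v⟩. -/
noncomputable def omegaC {n : ℕ} (u v : Fin n → ℂ) : ℝ :=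
  (∑ i, (starRingEnd ℂ) (u i) * v i).im

/-- Inclusion of real vectors into ℂⁿ. -/
def incl {n : ℕ} (x : Fin n → ℝ) : Fin n → ℂ := fun i => (x i : ℂ)

/-!
Expanding ω bilinearly, each of the four terms has the shape ω(z • x, w • y) = Im(z̄ w) ⟨x, y⟩
for real vectors x, y. The two mixed terms vanish because x ⟂ u, v, and in the other two
z̄ w is real: it is a b |γ'(t)|² resp. |γ(t)|².
-/

open ComplexConjugate

section omegaC

variable {n : ℕ}

theorem omegaC_add_left (p p' q : Fin n → ℂ) :
    omegaC (p + p') q = omegaC p q + omegaC p' q := by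
  simp only [omegaC, Pi.add_apply, map_add, add_mul, Finset.sum_add_distrib, add_im]

theorem omegaC_add_right (p q q' : Fin n → ℂ) :
    omegaC p (q + q') = omegaC p q + omegaC p q' := by
  simp only [omegaC, Pi.add_apply, mul_add, Finset.sum_add_distrib, add_im]

theorem omegaC_smul_incl (z w : ℂ) (x y : Fin n → ℝ) :
    omegaC (z • incl x) (w • incl y) = (conj z * w).im * ∑ i, x i * y i := by
  have hsum : ∑ i, conj ((z • incl x) i) * (w • incl y) i
      = conj z * w * ((∑ i, x i * y i : ℝ) : ℂ) := by
    push_cast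
    rw [Finset.mul_sum]
    refine Finset.sum_congr rfl fun i _ => ?_
    simp only [incl, Pi.smul_apply, smul_eq_mul, map_mul, conj_ofReal]
    ring
  rw [omegaC, hsum, im_mul_ofReal]

end omegaC

theorem im_conj_mul_self (z : ℂ) : (conj z * z).im = 0 := by
  rw [conj_mul', ← ofReal_pow, ofReal_im]

theorem im_conj_ofReal_mul_ofReal_mul (a b : ℝ) (z : ℂ) :
    (conj (a * z) * (b * z)).im = 0 := by
  have hreal : conj (a * z) * (b * z) = (a * b : ℝ) * (conj z * z) := by
    rw [map_mul, conj_ofReal]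
    push_cast
    ring
  rw [hreal, im_ofReal_mul, im_conj_mul_self, mul_zero]

theorem stmt1_general (n : ℕ) (γ : ℝ → ℂ) (t : ℝ)
    (x u v : Fin n → ℝ)
    (hu : ∑ i, x i * u i = 0) (hv : ∑ i, x i * v i = 0) (a b : ℝ) :
    omegaC (((a : ℂ) * deriv γ t) • incl x + γ t • incl u)
           (((b : ℂ) * deriv γ t) • incl x + γ t • incl v) = 0 := by
  have hu' : ∑ i, u i * x i = 0 := by simpa only [mul_comm] using hu
  simp only [omegaC_add_left, omegaC_add_right, omegaC_smul_incl, hu', hv,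
    im_conj_ofReal_mul_ofReal_mul, im_conj_mul_self, zero_mul, mul_zero, add_zero]

theorem stmt1 (n : ℕ) (γ : ℝ → ℂ) (hγ : Differentiable ℝ γ) (t : ℝ)
    (x u v : Fin n → ℝ) (hx : ∑ i, x i * x i = 1)
    (hu : ∑ i, x i * u i = 0) (hv : ∑ i, x i * v i = 0) (a b : ℝ) :
    omegaC (((a : ℂ) * deriv γ t) • incl x + γ t • incl u)
           (((b : ℂ) * deriv γ t) • incl x + γ t • incl v) = 0 :=
  stmt1_general n γ t x u v hu hv a b
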